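/- arXiv:2403.01925 — 3 statements merged into one kernel-verified Lean document; each statement's English description precedes it below -/
import Mathlib

section
/- For real numbers l⁻, l⁺ with 0 < l⁻ ≤ l⁺, one has cosh⁻¹((cosh l⁻ + cosh² l⁺)/sinh² l⁺) ≥ exp(-2 l⁺). -/
/-- The inverse hyperbolic cosine on `[1, ∞)`. -/
noncomputable def arcosh (x : ℝ) : ℝ := Real.log (x + Real.sqrt (x ^ 2 - 1))

/-!
Since `cosh² l⁺ = 1 + sinh² l⁺` and `cosh l⁻ ≥ 1`, the argument of `cosh⁻¹` is at least
`1 + a² / 2` with `a = 2 / sinh l⁺`, and `cosh⁻¹ (1 + a² / 2) ≥ log (1 + a) ≥ 2a / (a + 2)`.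
Here `2a / (a + 2) = 2 / (1 + sinh l⁺)`, which dominates `exp (-2 l⁺)` because
`sinh l⁺ ≤ exp l⁺ ≤ exp (2 l⁺)`.
-/

open Real hiding arcosh

lemma log_one_add_le_arcosh {a x : ℝ} (ha : 0 ≤ a) (hx : 1 + a ^ 2 / 2 ≤ x) :
    log (1 + a) ≤ arcosh x := by
  have hsqrt : a ≤ √(x ^ 2 - 1) := by
    rw [le_sqrt ha (by nlinarith)]
    nlinarith
  exact log_le_log (by linarith) (by nlinarith)

lemma one_add_two_div_sinh_sq_le {x : ℝ} (hx : sinh x ≠ 0) (y : ℝ) :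
    1 + 2 / sinh x ^ 2 ≤ (cosh y + cosh x ^ 2) / sinh x ^ 2 := by
  have hs : 0 < sinh x ^ 2 := by positivity
  rw [le_div_iff₀ hs, add_mul, div_mul_cancel₀ _ hs.ne', cosh_sq x]
  linarith [one_le_cosh y]

lemma sinh_le_exp (x : ℝ) : sinh x ≤ exp x := by
  rw [sinh_eq]
  linarith [exp_pos (-x), exp_pos x]

lemma exp_neg_two_mul_le_two_div_one_add_sinh {x : ℝ} (hx : 0 ≤ x) :
    exp (-2 * x) ≤ 2 / (1 + sinh x) := by
  have hsinh : 0 ≤ sinh x := sinh_nonneg_iff.2 hx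
  rw [le_div_iff₀ (by positivity), neg_mul, exp_neg, inv_mul_le_iff₀ (exp_pos _)]
  have hexp : exp x ≤ exp (2 * x) := exp_le_exp.2 (by linarith)
  linarith [sinh_le_exp x, one_le_exp (by linarith : 0 ≤ 2 * x)]

/-- Lower bound for the minimal distance between two boundary components of a
pair of pants with boundary half-lengths in `[l⁻, l⁺]`:
`cosh⁻¹((cosh l⁻ + cosh² l⁺)/sinh² l⁺) ≥ exp(-2 l⁺)`. -/
theorem delta_minus_lower_bound (lm lp : ℝ) (hlm : 0 < lm) (hle : lm ≤ lp) :
    Real.exp (-2 * lp) ≤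
      arcosh ((Real.cosh lm + Real.cosh lp ^ 2) / Real.sinh lp ^ 2) := by
  have hlp : 0 < lp := hlm.trans_le hle
  have hs : 0 < sinh lp := sinh_pos_iff.2 hlp
  have harg : 1 + (2 / sinh lp) ^ 2 / 2 ≤ (cosh lm + cosh lp ^ 2) / sinh lp ^ 2 := by
    convert one_add_two_div_sinh_sq_le hs.ne' lm using 2
    ring
  calc exp (-2 * lp) ≤ 2 / (1 + sinh lp) :=
      exp_neg_two_mul_le_two_div_one_add_sinh hlp.le
    _ = 2 * (2 / sinh lp) / (2 / sinh lp + 2) := by field_simp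
    _ ≤ log (1 + 2 / sinh lp) := le_log_one_add_of_nonneg (by positivity)
    _ ≤ arcosh ((cosh lm + cosh lp ^ 2) / sinh lp ^ 2) :=
      log_one_add_le_arcosh (by positivity) harg
end

section
/- Let δ_l = cosh⁻¹((cosh l + cosh² l)/sinh² l). Then at l = ln(2+√3) one has cosh(ln(2+√3)) = (cosh l + cosh² l)/sinh² l, so the fixed point equation δ_l = l is satisfied at l = ln(2+√3). -/
lemma s3 : Real.sqrt 3 ^ 2 = 3 := Real.sq_sqrt (by norm_num)

lemma pos23 : (0:ℝ) < 2 + Real.sqrt 3 := by positivity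

lemma exp_log23 : Real.exp (Real.log (2 + Real.sqrt 3)) = 2 + Real.sqrt 3 :=
  Real.exp_log pos23

lemma exp_neg_log23 : Real.exp (-Real.log (2 + Real.sqrt 3)) = 2 - Real.sqrt 3 := by
  rw [Real.exp_neg, exp_log23]
  rw [inv_eq_iff_eq_inv, eq_comm, inv_eq_one_div,
    div_eq_iff (by nlinarith [s3, Real.sqrt_nonneg 3] : (2:ℝ) - Real.sqrt 3 ≠ 0)]
  nlinarith [s3]

lemma cosh23 : Real.cosh (Real.log (2 + Real.sqrt 3)) = 2 := by
  rw [Real.cosh_eq, exp_log23, exp_neg_log23]; ring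

lemma sinh23 : Real.sinh (Real.log (2 + Real.sqrt 3)) = Real.sqrt 3 := by
  rw [Real.sinh_eq, exp_log23, exp_neg_log23]; ring

/-- The fixed point equation `δ_l = l` for
`δ_l = cosh⁻¹((cosh l + cosh² l)/sinh² l)` holds at `l = ln(2 + √3)`. -/
theorem delta_fixed_point :
    arcosh ((Real.cosh (Real.log (2 + Real.sqrt 3)) +
        Real.cosh (Real.log (2 + Real.sqrt 3)) ^ 2) /
        Real.sinh (Real.log (2 + Real.sqrt 3)) ^ 2) =
      Real.log (2 + Real.sqrt 3) := by
  rw [cosh23, sinh23, s3]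
  norm_num [arcosh]
end

section
/- Let X₁, ..., Xₙ be independent random variables, Xᵢ taking values in a set 𝒳ᵢ, and let f : 𝒳₁ × ⋯ × 𝒳ₙ → ℝ satisfy the bounded differences condition with constants c₁, ..., cₙ: changing the i-th coordinate changes f by at most cᵢ. Then for every ε > 0, P(|f(X₁,...,Xₙ) - E f(X₁,...,Xₙ)| ≥ ε) ≤ 2 exp(-2ε² / Σᵢ cᵢ²). -/
/-!
Under the product law of `(X₁, …, Xₙ)`, split `f - E f` into the fluctuation of `f` in the first
coordinate around its mean over that coordinate, and the centred mean itself. Given the other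
coordinates, the fluctuation has range at most `c₁`, so Hoeffding's lemma makes it sub-Gaussian
with variance proxy `c₁² / 4`; the mean is a function of the remaining coordinates with the same
bounded differences, so induction applies to it. The mgf of the sum factorises over the product
measure, hence `f - E f` is sub-Gaussian with proxy `∑ cᵢ² / 4`, and the Chernoff bound on both
tails gives `2 exp (-2ε² / ∑ cᵢ²)`.
-/

open MeasureTheory ProbabilityTheory Real Set
open scoped NNReal

lemma exists_forall_mem_Icc_of_abs_sub_le {α : Type*} [Nonempty α] {h : α → ℝ} {c : ℝ}
    (hc : ∀ a b, |h a - h b| ≤ c) : ∃ m, ∀ a, h a ∈ Icc m (m + c) := by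
  obtain ⟨a₀⟩ := ‹Nonempty α›
  have hbdd : BddBelow (range h) := by
    refine ⟨h a₀ - c, ?_⟩
    rintro _ ⟨a, rfl⟩
    linarith [(abs_le.1 (hc a₀ a)).2]
  refine ⟨⨅ a, h a, fun a => ⟨ciInf_le hbdd a, ?_⟩⟩
  have : h a - c ≤ ⨅ b, h b := le_ciInf fun b => by linarith [(abs_le.1 (hc a b)).2]
  linarith

namespace ProbabilityTheory

variable {α β : Type*} [MeasurableSpace α] [MeasurableSpace β]

lemma hasSubgaussianMGF_sub_integral_of_abs_sub_le {ν : Measure α} [IsProbabilityMeasure ν]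
    {h : α → ℝ} (hh : Measurable h) {c : ℝ} (hc : ∀ a b, |h a - h b| ≤ c) :
    HasSubgaussianMGF (fun a => h a - ∫ a, h a ∂ν) ((‖c‖₊ / 2) ^ 2) ν := by
  have := nonempty_of_isProbabilityMeasure ν
  obtain ⟨m, hm⟩ := exists_forall_mem_Icc_of_abs_sub_le hc
  simpa using hasSubgaussianMGF_of_mem_Icc hh.aemeasurable (ae_of_all ν hm)

lemma hasSubgaussianMGF_prod_sub_integral {ν : Measure α} {τ : Measure β}
    [IsProbabilityMeasure ν] [IsProbabilityMeasure τ] {F : α × β → ℝ} (hF : Measurable F)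
    {a b : ℝ} (hFab : ∀ p, F p ∈ Icc a b) {c₁ c₂ : ℝ≥0}
    (hsection : ∀ y, HasSubgaussianMGF (fun x => F (x, y) - ∫ x, F (x, y) ∂ν) c₁ ν)
    (hmean : HasSubgaussianMGF (fun y => ∫ x, F (x, y) ∂ν - ∫ p, F p ∂(ν.prod τ)) c₂ τ) :
    HasSubgaussianMGF (fun p => F p - ∫ p, F p ∂(ν.prod τ)) (c₁ + c₂) (ν.prod τ) := by
  set m := ∫ p, F p ∂(ν.prod τ)
  set g := fun y => ∫ x, F (x, y) ∂ν
  have hint (t : ℝ) : Integrable (fun p => exp (t * (F p - m))) (ν.prod τ) :=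
    integrable_exp_mul_of_mem_Icc (a := a - m) (b := b - m) (hF.sub_const m).aemeasurable
      (ae_of_all _ fun p => ⟨by linarith [(hFab p).1], by linarith [(hFab p).2]⟩)
  refine ⟨hint, fun t => ?_⟩
  calc mgf (fun p => F p - m) (ν.prod τ) t
      = ∫ y, exp (t * (g y - m)) * mgf (fun x => F (x, y) - g y) ν t ∂τ := by
        rw [mgf, integral_prod_symm _ (hint t)]
        refine integral_congr_ae (ae_of_all _ fun y => ?_)
        simp only [mgf, ← integral_const_mul, ← exp_add]
        congr 1 with x
        congr 1
        ring
    _ ≤ ∫ y, exp (t * (g y - m)) * exp (c₁ * t ^ 2 / 2) ∂τ :=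
        integral_mono_of_nonneg (ae_of_all _ fun y => mul_nonneg (exp_nonneg _) mgf_nonneg)
          ((hmean.integrable_exp_mul t).mul_const _)
          (ae_of_all _ fun y => mul_le_mul_of_nonneg_left ((hsection y).mgf_le t) (exp_nonneg _))
    _ = mgf (fun y => g y - m) τ t * exp (c₁ * t ^ 2 / 2) := integral_mul_const _ _
    _ ≤ exp (c₂ * t ^ 2 / 2) * exp (c₁ * t ^ 2 / 2) :=
        mul_le_mul_of_nonneg_right (hmean.mgf_le t) (exp_nonneg _)
    _ = exp (↑(c₁ + c₂) * t ^ 2 / 2) := by rw [← exp_add]; push_cast; ring_nf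

lemma hasSubgaussianMGF_comp_sub_integral_of_map {μ : Measure α} {T : α → β}
    (hT : AEMeasurable T μ) {F : β → ℝ} (hF : AEStronglyMeasurable F (μ.map T)) {c : ℝ≥0}
    (h : HasSubgaussianMGF (fun y => F y - ∫ y, F y ∂(μ.map T)) c (μ.map T)) :
    HasSubgaussianMGF (fun x => F (T x) - ∫ x, F (T x) ∂μ) c μ := by
  rw [← integral_map hT hF]
  exact h.of_map hT

lemma HasSubgaussianMGF.measureReal_abs_ge_le {μ : Measure α} [IsFiniteMeasure μ] {X : α → ℝ}
    {c : ℝ≥0} (h : HasSubgaussianMGF X c μ) {ε : ℝ} (hε : 0 ≤ ε) :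
    μ.real {ω | ε ≤ |X ω|} ≤ 2 * exp (-ε ^ 2 / (2 * c)) := by
  have hsplit : {ω | ε ≤ |X ω|} = {ω | ε ≤ X ω} ∪ {ω | ε ≤ (-X) ω} := by
    ext ω
    simp [le_abs', le_neg, or_comm]
  calc μ.real {ω | ε ≤ |X ω|} ≤ μ.real {ω | ε ≤ X ω} + μ.real {ω | ε ≤ (-X) ω} := by
        rw [hsplit]; exact measureReal_union_le _ _
    _ ≤ exp (-ε ^ 2 / (2 * c)) + exp (-ε ^ 2 / (2 * c)) :=
        add_le_add (h.measure_ge_le hε) (h.neg.measure_ge_le hε)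
    _ = 2 * exp (-ε ^ 2 / (2 * c)) := by ring

section BoundedDifferences

variable {ι : Type*} [DecidableEq ι] {𝒳 : ι → Type*}

def HasBoundedDifferences (f : (∀ i, 𝒳 i) → ℝ) (c : ι → ℝ) : Prop :=
  ∀ (i : ι) (x : ∀ j, 𝒳 j) (x' : 𝒳 i), |f x - f (Function.update x i x')| ≤ c i

variable {f : (∀ i, 𝒳 i) → ℝ} {c : ι → ℝ}

lemma HasBoundedDifferences.abs_sub_le_sum [Fintype ι] (hf : HasBoundedDifferences f c)
    (x y : ∀ i, 𝒳 i) : |f x - f y| ≤ ∑ i, c i := by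
  have key (s : Finset ι) : |f x - f (s.piecewise y x)| ≤ ∑ i ∈ s, c i := by
    induction s using Finset.induction with
    | empty => simp
    | insert j s hj ih =>
      rw [Finset.piecewise_insert, Finset.sum_insert hj]
      have := hf j (s.piecewise y x) (y j)
      calc |f x - f (Function.update (s.piecewise y x) j (y j))|
          ≤ |f x - f (s.piecewise y x)|
            + |f (s.piecewise y x) - f (Function.update (s.piecewise y x) j (y j))| :=
            abs_sub_le _ _ _
        _ ≤ c j + ∑ i ∈ s, c i := by linarith
  simpa using key Finset.univ

lemma HasBoundedDifferences.mem_Icc [Fintype ι] (hf : HasBoundedDifferences f c)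
    (x₀ x : ∀ i, 𝒳 i) : f x ∈ Icc (f x₀ - ∑ i, c i) (f x₀ + ∑ i, c i) := by
  have := abs_le.1 (hf.abs_sub_le_sum x x₀)
  constructor <;> linarith [this.1, this.2]

lemma HasBoundedDifferences.integral {α : Type*} [MeasurableSpace α] {ν : Measure α}
    [IsProbabilityMeasure ν] {F : α → (∀ i, 𝒳 i) → ℝ} (hF : ∀ a, HasBoundedDifferences (F a) c)
    (hint : ∀ x, Integrable (fun a => F a x) ν) :
    HasBoundedDifferences (fun x => ∫ a, F a x ∂ν) c := by
  intro i x x'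
  rw [← integral_sub (hint _) (hint _), ← Real.norm_eq_abs]
  simpa using norm_integral_le_of_norm_le_const
    (ae_of_all ν fun a => ((Real.norm_eq_abs _).trans_le (hF a i x x')))

end BoundedDifferences

lemma HasBoundedDifferences.comp_insertNth {n : ℕ} {𝒳 : Fin (n + 1) → Type*}
    {f : (∀ i, 𝒳 i) → ℝ} {c : Fin (n + 1) → ℝ} (hf : HasBoundedDifferences f c)
    (i : Fin (n + 1)) (a : 𝒳 i) :
    HasBoundedDifferences (fun y => f (i.insertNth a y)) (fun j => c (i.succAbove j)) :=
  fun j y b => by simpa using hf (i.succAbove j) (i.insertNth a y) b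

lemma HasBoundedDifferences.abs_sub_insertNth_le {n : ℕ} {𝒳 : Fin (n + 1) → Type*}
    {f : (∀ i, 𝒳 i) → ℝ} {c : Fin (n + 1) → ℝ} (hf : HasBoundedDifferences f c)
    (i : Fin (n + 1)) (y : ∀ j, 𝒳 (i.succAbove j)) (a a' : 𝒳 i) :
    |f (i.insertNth a y) - f (i.insertNth a' y)| ≤ c i := by
  simpa using hf i (i.insertNth a y) a'

theorem hasSubgaussianMGF_pi_of_hasBoundedDifferences {n : ℕ} {𝒳 : Fin n → Type*}
    [∀ i, MeasurableSpace (𝒳 i)] (P : ∀ i, Measure (𝒳 i)) [∀ i, IsProbabilityMeasure (P i)]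
    {f : (∀ i, 𝒳 i) → ℝ} (hf : Measurable f) {c : Fin n → ℝ} (hbd : HasBoundedDifferences f c) :
    HasSubgaussianMGF (fun x => f x - ∫ x, f x ∂Measure.pi P) (∑ i, (‖c i‖₊ / 2) ^ 2)
      (Measure.pi P) := by
  induction n with
  | zero =>
    simpa using hasSubgaussianMGF_sub_integral_of_abs_sub_le (ν := Measure.pi P) hf (c := 0)
      fun x y => by simp [Subsingleton.elim x y]
  | succ n ih =>
    let e := MeasurableEquiv.piFinSuccAbove 𝒳 0
    let τ := Measure.pi fun j => P (Fin.succAbove 0 j)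
    let F : 𝒳 0 × (∀ j, 𝒳 (Fin.succAbove 0 j)) → ℝ := fun p => f (e.symm p)
    have hF : Measurable F := hf.comp e.symm.measurable
    obtain ⟨x₀⟩ := nonempty_of_isProbabilityMeasure (Measure.pi P)
    have hFab (p) : F p ∈ Icc (f x₀ - ∑ i, c i) (f x₀ + ∑ i, c i) := hbd.mem_Icc x₀ _
    have hsection (y) : HasSubgaussianMGF (fun a => F (a, y) - ∫ a, F (a, y) ∂P 0)
        ((‖c 0‖₊ / 2) ^ 2) (P 0) :=
      hasSubgaussianMGF_sub_integral_of_abs_sub_le (hF.comp measurable_prodMk_right)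
        fun a a' => hbd.abs_sub_insertNth_le 0 y a a'
    have hmean : HasSubgaussianMGF (fun y => ∫ a, F (a, y) ∂P 0 - ∫ p, F p ∂(P 0).prod τ)
        (∑ j, (‖c (Fin.succAbove 0 j)‖₊ / 2) ^ 2) τ := by
      rw [integral_prod_symm F (Integrable.of_mem_Icc _ _ hF.aemeasurable (ae_of_all _ hFab))]
      refine ih _ hF.stronglyMeasurable.integral_prod_left'.measurable
        (HasBoundedDifferences.integral (fun a => hbd.comp_insertNth 0 a) fun y =>
          Integrable.of_mem_Icc _ _ (hF.comp measurable_prodMk_right).aemeasurable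
            (ae_of_all _ fun a => hFab (a, y)))
    have hprod := hasSubgaussianMGF_prod_sub_integral hF hFab hsection hmean
    rw [← (measurePreserving_piFinSuccAbove P 0).map_eq] at hprod
    have hFe (x) : F (e x) = f x := congrArg f (e.symm_apply_apply x)
    simpa only [hFe, Fin.sum_univ_succAbove _ 0, add_comm] using
      hasSubgaussianMGF_comp_sub_integral_of_map e.measurable.aemeasurable
        hF.aestronglyMeasurable hprod

end ProbabilityTheory

theorem mcdiarmid_inequality_general {Ω : Type*} [MeasurableSpace Ω] (μ : Measure Ω)
    [IsProbabilityMeasure μ] {n : ℕ} (𝒳 : Fin n → Type*)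
    [∀ i, MeasurableSpace (𝒳 i)]
    (X : ∀ i, Ω → 𝒳 i) (hXmeas : ∀ i, Measurable (X i))
    (hindep : iIndepFun X μ)
    (f : (∀ i, 𝒳 i) → ℝ) (hf : Measurable f)
    (c : Fin n → ℝ)
    (hbd : ∀ (i : Fin n) (x : ∀ j, 𝒳 j) (x' : 𝒳 i),
      |f x - f (Function.update x i x')| ≤ c i)
    (ε : ℝ) (hε : 0 < ε) :
    (μ {ω | ε ≤ |f (fun i => X i ω) - ∫ ω', f (fun i => X i ω') ∂μ|}).toReal ≤
      2 * Real.exp (-2 * ε ^ 2 / ∑ i, c i ^ 2) := by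
  have (i : Fin n) : IsProbabilityMeasure (μ.map (X i)) :=
    Measure.isProbabilityMeasure_map (hXmeas i).aemeasurable
  have hlaw := hindep.map_fun_eq_pi_map fun i => (hXmeas i).aemeasurable
  have hsub := hasSubgaussianMGF_comp_sub_integral_of_map
    (measurable_pi_lambda _ hXmeas).aemeasurable hf.aestronglyMeasurable
    (hlaw ▸ hasSubgaussianMGF_pi_of_hasBoundedDifferences _ hf hbd)
  -- Holds also when `∑ i, c i ^ 2 = 0`: both sides are then `0`, as `x / 0 = 0`.
  have hparam :
      -ε ^ 2 / (2 * ((∑ i, (‖c i‖₊ / 2) ^ 2 : ℝ≥0) : ℝ)) = -2 * ε ^ 2 / ∑ i, c i ^ 2 := by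
    push_cast
    simp only [Real.norm_eq_abs, div_pow, sq_abs, ← Finset.sum_div]
    rw [mul_div_assoc', div_div_eq_mul_div]
    ring
  simpa only [hparam, measureReal_def] using hsub.measureReal_abs_ge_le hε.le

/-- McDiarmid's bounded differences inequality: if `X₁, ..., Xₙ` are
independent and `f` satisfies the bounded differences condition with constants
`c₁, ..., cₙ`, then
`P(|f(X) - E f(X)| ≥ ε) ≤ 2 exp(-2ε²/Σ cᵢ²)`. -/
theorem mcdiarmid_inequality {Ω : Type*} [MeasurableSpace Ω] (μ : Measure Ω)
    [IsProbabilityMeasure μ] {n : ℕ} (𝒳 : Fin n → Type*)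
    [∀ i, MeasurableSpace (𝒳 i)]
    (X : ∀ i, Ω → 𝒳 i) (hXmeas : ∀ i, Measurable (X i))
    (hindep : iIndepFun X μ)
    (f : (∀ i, 𝒳 i) → ℝ) (hf : Measurable f)
    (c : Fin n → ℝ)
    (hbd : ∀ (i : Fin n) (x : ∀ j, 𝒳 j) (x' : 𝒳 i),
      |f x - f (Function.update x i x')| ≤ c i)
    (hint : Integrable (fun ω => f (fun i => X i ω)) μ)
    (ε : ℝ) (hε : 0 < ε) :
    (μ {ω | ε ≤ |f (fun i => X i ω) - ∫ ω', f (fun i => X i ω') ∂μ|}).toReal ≤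
      2 * Real.exp (-2 * ε ^ 2 / ∑ i, c i ^ 2) :=
  mcdiarmid_inequality_general μ 𝒳 X hXmeas hindep f hf c hbd ε hε
end
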